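/- arXiv:1409.2083 — 2 statements merged into one kernel-verified Lean document; each statement's English description precedes it below -/
import Mathlib

section
/- Let n ≥ 1 and a ∈ ℂ with |a| = 1, and suppose Re(a) ≥ 0 if n is even and Re(a) = 0 if n is odd. Consider the set D = {ξ ∈ ℂ : Re(a ξ^n) < 0}. Then D ∩ {ξ : Im ξ < 0} is a union of exactly N disjoint open circular sectors, where N = n/2 if n is even, N = (n−1)/2 if n is odd and a = i, and N = (n+1)/2 if n is odd and a = −i. -/
/-!
Writing `φ = arg a` and `θ = arg ξ`, one has `Re (a ξ^n) = ‖a‖ ‖ξ‖^n cos (φ + n θ)`, so in the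
lower half plane `θ ∈ (-π, 0)` the domain is cut out by `φ + n θ ∈ (π/2, 3π/2) + 2πk`.
Since `|φ| ≤ π/2`, the range `(φ - nπ, φ)` of `φ + n θ` meets only the intervals with `k < 0`,
and the hypotheses on `a` say exactly that its left end `φ - nπ` falls where the cosine is
nonnegative, i.e. `|(n - 2N)π - φ| ≤ π/2`; then the intervals with `k = -1, …, -N` lie inside
it entirely and no other one meets it.
-/

open Complex Set

local notation "π" => Real.pi

theorem Real.cos_neg_iff_exists_int {x : ℝ} :
    Real.cos x < 0 ↔ ∃ k : ℤ, π / 2 + k * (2 * π) < x ∧ x < 3 * π / 2 + k * (2 * π) := by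
  constructor
  · intro hx
    set k := toIocDiv Real.two_pi_pos (π / 2) x
    have hy := toIocMod_mem_Ioc Real.two_pi_pos (π / 2) x
    rw [← self_sub_toIocDiv_zsmul, zsmul_eq_mul] at hy
    refine ⟨k, by linarith [hy.1], ?_⟩
    by_contra! hk
    -- past `3π/2` the representative lies in `[-π/2, π/2] + 2π`, where the cosine is nonnegative
    have : 0 ≤ Real.cos (x - (k + 1 : ℤ) * (2 * π)) := by
      apply Real.cos_nonneg_of_mem_Icc; push_cast; constructor <;> linarith [hy.2]
    rw [Real.cos_sub_int_mul_two_pi] at this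
    linarith
  · rintro ⟨k, hk₁, hk₂⟩
    rw [← Real.cos_sub_int_mul_two_pi x k]
    exact Real.cos_neg_of_pi_div_two_lt_of_lt (by linarith) (by linarith)

theorem Complex.re_mul_pow (a ξ : ℂ) (n : ℕ) :
    (a * ξ ^ n).re = ‖a‖ * ‖ξ‖ ^ n * Real.cos (a.arg + n * ξ.arg) := by
  have : a * ξ ^ n = ((‖a‖ * ‖ξ‖ ^ n : ℝ) : ℂ) * exp ((a.arg + n * ξ.arg : ℝ) * I) := by
    conv_lhs => rw [← norm_mul_exp_arg_mul_I a, ← norm_mul_exp_arg_mul_I ξ]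
    rw [mul_pow, ← exp_nat_mul]
    push_cast
    rw [add_mul, exp_add]
    ring_nf
  rw [this, re_ofReal_mul, exp_ofReal_mul_I_re]

theorem Complex.re_mul_pow_neg_iff {a ξ : ℂ} (ha : a ≠ 0) (hξ : ξ ≠ 0) (n : ℕ) :
    (a * ξ ^ n).re < 0 ↔ Real.cos (a.arg + n * ξ.arg) < 0 := by
  have hpos : 0 < ‖a‖ * ‖ξ‖ ^ n := by positivity
  rw [re_mul_pow]
  exact ⟨fun h => neg_of_mul_neg_right h hpos.le, mul_neg_of_pos_of_neg hpos⟩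

def argSector (α β : ℝ) : Set ℂ := {ξ | ξ ≠ 0 ∧ α < ξ.arg ∧ ξ.arg < β}

theorem isOpen_argSector {α β : ℝ} (hβ : β ≤ π) : IsOpen (argSector α β) := by
  have : argSector α β = slitPlane ∩ arg ⁻¹' Ioo α β := by
    ext ξ
    exact ⟨fun ⟨hξ, h⟩ => ⟨mem_slitPlane_iff_arg.mpr ⟨(h.2.trans_le hβ).ne, hξ⟩, h⟩,
      fun ⟨hξ, h⟩ => ⟨slitPlane_ne_zero hξ, h⟩⟩
  rw [this]
  exact continuousOn_arg.isOpen_inter_preimage isOpen_slitPlane isOpen_Ioo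

theorem argSector_nonempty {α β : ℝ} (hα : -π ≤ α) (hαβ : α < β) (hβ : β ≤ π) :
    (argSector α β).Nonempty := by
  have hγ : (α + β) / 2 ∈ Ioc (-π) π := ⟨by linarith, by linarith⟩
  refine ⟨cos ((α + β) / 2 : ℝ) + sin ((α + β) / 2 : ℝ) * I, ?_, ?_⟩
  · rw [← exp_mul_I]; exact exp_ne_zero _
  · rw [arg_cos_add_sin_mul_I hγ]
    constructor <;> linarith

theorem disjoint_argSector {α₁ β₁ α₂ β₂ : ℝ} (h : β₁ ≤ α₂) :
    Disjoint (argSector α₁ β₁) (argSector α₂ β₂) :=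
  disjoint_left.mpr fun _ ⟨_, _, h₁⟩ ⟨_, h₂, _⟩ => by linarith

/-- The `m`-th sector below the real axis on which `cos (φ + n θ) < 0`: there
`φ + n θ ∈ (π/2, 3π/2) - 2π(m + 1)`. -/
noncomputable def sectorStart (n : ℕ) (φ : ℝ) (m : ℕ) : ℝ := (π / 2 - φ - (m + 1) * (2 * π)) / n

noncomputable def sectorEnd (n : ℕ) (φ : ℝ) (m : ℕ) : ℝ := (3 * π / 2 - φ - (m + 1) * (2 * π)) / n

section Sectors

variable {n : ℕ} {φ : ℝ}

theorem sectorStart_lt_iff (hn : 0 < n) {m : ℕ} {θ : ℝ} :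
    sectorStart n φ m < θ ↔ π / 2 - (m + 1) * (2 * π) < φ + n * θ := by
  rw [sectorStart, div_lt_iff₀' (by positivity)]
  constructor <;> intro h <;> linarith

theorem lt_sectorEnd_iff (hn : 0 < n) {m : ℕ} {θ : ℝ} :
    θ < sectorEnd n φ m ↔ φ + n * θ < 3 * π / 2 - (m + 1) * (2 * π) := by
  rw [sectorEnd, lt_div_iff₀' (by positivity)]
  constructor <;> intro h <;> linarith

theorem sectorStart_lt_sectorEnd (hn : 0 < n) (m : ℕ) : sectorStart n φ m < sectorEnd n φ m := by
  unfold sectorStart sectorEnd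
  gcongr
  linarith [Real.pi_pos]

theorem sectorEnd_le_sectorStart {m m' : ℕ} (h : m < m') :
    sectorEnd n φ m' ≤ sectorStart n φ m := by
  have : (m : ℝ) + 1 ≤ m' := by exact_mod_cast h
  unfold sectorStart sectorEnd
  apply div_le_div_of_nonneg_right _ n.cast_nonneg
  nlinarith [Real.pi_pos]

theorem sectorEnd_nonpos (hφ : -(π / 2) ≤ φ) (m : ℕ) : sectorEnd n φ m ≤ 0 := by
  unfold sectorEnd
  apply div_nonpos_of_nonpos_of_nonneg _ n.cast_nonneg
  nlinarith [Real.pi_pos, (m.cast_nonneg : (0 : ℝ) ≤ m)]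

theorem neg_pi_le_sectorStart (hn : 0 < n) {N m : ℕ} (hN : -(π / 2) ≤ (n - 2 * N : ℝ) * π - φ)
    (hm : m < N) : -π ≤ sectorStart n φ m := by
  have : (m : ℝ) + 1 ≤ N := by exact_mod_cast hm
  rw [sectorStart, le_div_iff₀ (by positivity)]
  nlinarith [Real.pi_pos]

end Sectors

theorem re_mul_pow_neg_and_im_neg_iff {n N : ℕ} (hn : 0 < n) {a : ℂ} (ha : a ≠ 0)
    (hφ : |a.arg| ≤ π / 2) (hN : |(n - 2 * N : ℝ) * π - a.arg| ≤ π / 2) (ξ : ℂ) :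
    (a * ξ ^ n).re < 0 ∧ ξ.im < 0 ↔
      ∃ m < N, ξ ∈ argSector (sectorStart n a.arg m) (sectorEnd n a.arg m) := by
  rw [abs_le] at hφ hN
  have hπ := Real.pi_pos
  constructor
  · rintro ⟨hre, him⟩
    have hξ : ξ ≠ 0 := by rintro rfl; simp at him
    have hθ : ξ.arg < 0 := arg_neg_iff.mpr him
    obtain ⟨k, hk₁, hk₂⟩ := Real.cos_neg_iff_exists_int.mp ((re_mul_pow_neg_iff ha hξ n).mp hre)
    have hnθ : -(n * π) < n * ξ.arg := by
      have := neg_pi_lt_arg ξ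
      have : (0 : ℝ) < n := by exact_mod_cast hn
      nlinarith
    have hnθ' : n * ξ.arg < 0 := mul_neg_of_pos_of_neg (by positivity) hθ
    -- `φ + n θ ∈ (φ - nπ, φ)` only meets the intervals of index `k = -1, …, -N`
    obtain ⟨m, rfl⟩ : ∃ m : ℕ, k = Int.negSucc m := by
      apply Int.eq_negSucc_of_lt_zero
      have : (k : ℝ) < 0 := by nlinarith
      exact_mod_cast this
    rw [Int.cast_negSucc] at hk₁ hk₂
    push_cast at hk₁ hk₂
    refine ⟨m, ?_, hξ, (sectorStart_lt_iff hn).mpr (by linarith),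
      (lt_sectorEnd_iff hn).mpr (by linarith)⟩
    have : (m : ℝ) < N := by nlinarith
    exact_mod_cast this
  · rintro ⟨m, hm, hξ, h₁, h₂⟩
    have hθ : ξ.arg < 0 := h₂.trans_le (sectorEnd_nonpos hφ.1 m)
    refine ⟨(re_mul_pow_neg_iff ha hξ n).mpr (Real.cos_neg_iff_exists_int.mpr
      ⟨Int.negSucc m, ?_, ?_⟩), arg_neg_iff.mp hθ⟩
    · have := (sectorStart_lt_iff hn).mp h₁
      rw [Int.cast_negSucc]; push_cast; linarith
    · have := (lt_sectorEnd_iff hn).mp h₂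
      rw [Int.cast_negSucc]; push_cast; linarith

theorem Complex.eq_I_or_eq_neg_I_of_norm_eq_one {a : ℂ} (ha : ‖a‖ = 1) (hre : a.re = 0) :
    a = I ∨ a = -I := by
  have : a = a.im * I := ext (by simp [hre]) (by simp)
  rw [this, norm_mul, norm_I, mul_one, norm_real, Real.norm_eq_abs] at ha
  rcases (abs_eq zero_le_one).mp ha with h | h <;> rw [this, h] <;> simp

theorem exists_argSector_decomposition {n N : ℕ} (hn : 0 < n) {a : ℂ} (ha : a ≠ 0)
    (hφ : |a.arg| ≤ π / 2) (hN : |(n - 2 * N : ℝ) * π - a.arg| ≤ π / 2) :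
    ∃ α β : Fin N → ℝ,
      (∀ m, -π ≤ α m ∧ α m < β m ∧ β m ≤ 0) ∧
      Pairwise (fun m m' => Disjoint (argSector (α m) (β m)) (argSector (α m') (β m'))) ∧
      (∀ m, (argSector (α m) (β m)).Nonempty) ∧
      (∀ m, IsOpen (argSector (α m) (β m))) ∧
      {ξ : ℂ | (a * ξ ^ n).re < 0 ∧ ξ.im < 0} = ⋃ m, argSector (α m) (β m) := by
  have hbounds : ∀ m : Fin N, -π ≤ sectorStart n a.arg m ∧
      sectorStart n a.arg m < sectorEnd n a.arg m ∧ sectorEnd n a.arg m ≤ 0 := fun m =>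
    ⟨neg_pi_le_sectorStart hn (abs_le.mp hN).1 m.2, sectorStart_lt_sectorEnd hn m,
      sectorEnd_nonpos (abs_le.mp hφ).1 m⟩
  have hπ := Real.pi_pos
  refine ⟨fun m => sectorStart n a.arg m, fun m => sectorEnd n a.arg m, hbounds, ?_,
    fun m => argSector_nonempty (hbounds m).1 (hbounds m).2.1 (by linarith [(hbounds m).2.2]),
    fun m => isOpen_argSector (by linarith [(hbounds m).2.2]), ?_⟩
  · exact (pairwise_disjoint_on _).mpr fun m m' h => (disjoint_argSector
      (sectorEnd_le_sectorStart (Fin.lt_def.mp h))).symm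
  · ext ξ
    rw [mem_iUnion, Fin.exists_iff]
    simp only [exists_prop]
    exact re_mul_pow_neg_and_im_neg_iff hn ha hφ hN ξ

/-- The part of the principal domain `{ξ : Re (a ξ^n) < 0}` lying in the open lower
half plane is a union of exactly `N` disjoint nonempty open circular sectors, where
`N = n/2` if `n` is even, `N = (n-1)/2` if `n` is odd and `a = i`, and
`N = (n+1)/2` if `n` is odd and `a = -i`. -/
theorem stmt0 (n : ℕ) (hn : 1 ≤ n) (a : ℂ) (ha : ‖a‖ = 1)
    (heven : Even n → 0 ≤ a.re) (hodd : ¬ Even n → a.re = 0) :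
    ∃ α β : Fin (if Even n then n / 2 else if a = Complex.I then (n - 1) / 2 else (n + 1) / 2) → ℝ,
      (∀ m, -Real.pi ≤ α m ∧ α m < β m ∧ β m ≤ 0) ∧
      (Pairwise fun m m' =>
        Disjoint {ξ : ℂ | ξ ≠ 0 ∧ α m < ξ.arg ∧ ξ.arg < β m}
          {ξ : ℂ | ξ ≠ 0 ∧ α m' < ξ.arg ∧ ξ.arg < β m'}) ∧
      (∀ m, ({ξ : ℂ | ξ ≠ 0 ∧ α m < ξ.arg ∧ ξ.arg < β m} : Set ℂ).Nonempty) ∧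
      (∀ m, IsOpen {ξ : ℂ | ξ ≠ 0 ∧ α m < ξ.arg ∧ ξ.arg < β m}) ∧
      {ξ : ℂ | (a * ξ ^ n).re < 0 ∧ ξ.im < 0} =
        ⋃ m, {ξ : ℂ | ξ ≠ 0 ∧ α m < ξ.arg ∧ ξ.arg < β m} := by
  have ha₀ : a ≠ 0 := norm_ne_zero_iff.mp (by rw [ha]; exact one_ne_zero)
  have hπ := Real.pi_pos
  by_cases hE : Even n
  · rw [if_pos hE]
    have hφ := abs_arg_le_pi_div_two_iff.mpr (heven hE)
    obtain ⟨c, rfl⟩ := hE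
    refine exists_argSector_decomposition hn ha₀ hφ ?_
    rwa [show (c + c) / 2 = c by omega, Nat.cast_add, show (c + c - 2 * c : ℝ) = 0 by ring,
      zero_mul, zero_sub, abs_neg]
  · rw [if_neg hE]
    obtain ⟨c, rfl⟩ := Nat.not_even_iff_odd.mp hE
    rcases eq_I_or_eq_neg_I_of_norm_eq_one ha (hodd hE) with rfl | rfl
    · rw [if_pos rfl]
      refine exists_argSector_decomposition hn I_ne_zero (by rw [arg_I, abs_of_pos]; positivity) ?_
      rw [show (2 * c + 1 - 1) / 2 = c by omega, arg_I]
      push_cast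
      rw [abs_le]; constructor <;> linarith
    · rw [if_neg (by norm_num [Complex.ext_iff])]
      refine exists_argSector_decomposition hn (neg_ne_zero.mpr I_ne_zero)
        (by rw [arg_neg_I, abs_neg, abs_of_pos]; positivity) ?_
      rw [show (2 * c + 1 + 1) / 2 = c + 1 by omega, arg_neg_I]
      push_cast
      rw [abs_le]; constructor <;> linarith
end

section
/- Let a = e^{iφ} with φ ∈ [−π/2, π/2] and n even. Then for every m ∈ {0,…,n−1}, the sector S_m = {R e^{iθ} : R > 0, θ + (φ−2mπ)/n ∈ (π/(2n), 3π/(2n))} satisfies: S_m is contained in the open upper half plane or in the open lower half plane (it never crosses the real axis). -/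
open Complex Set Real

/-- For `a = e^{iφ}` with `φ ∈ [-π/2, π/2]` and `n` even, each sector
`S_m = {R e^{iθ} : R > 0, θ + (φ - 2mπ)/n ∈ (π/(2n), 3π/(2n))}` is entirely
contained in the open upper half plane or entirely in the open lower half plane. -/
theorem stmt1 (n : ℕ) (hpos : 0 < n) (hn : Even n) (φ : ℝ)
    (hφ : φ ∈ Set.Icc (-(Real.pi / 2)) (Real.pi / 2)) (m : ℕ) (hm : m < n)
    (S : Set ℂ)
    (hS : S = {z : ℂ | ∃ R θ : ℝ, 0 < R ∧ z = (R : ℂ) * Complex.exp (θ * Complex.I) ∧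
      Real.pi / (2 * n) < θ + (φ - 2 * m * Real.pi) / n ∧
      θ + (φ - 2 * m * Real.pi) / n < 3 * Real.pi / (2 * n)}) :
    (∀ z ∈ S, 0 < z.im) ∨ (∀ z ∈ S, z.im < 0) := by
  subst hS
  obtain ⟨hφ1, hφ2⟩ := hφ
  set K : ℕ := 2 * m / n with hK
  have hdm := Nat.div_add_mod (2 * m) n
  have hmod2 : 2 * m % n % 2 = 0 := by
    rw [Nat.mod_mod_of_dvd _ hn.two_dvd]; omega
  have hn2 : n % 2 = 0 := Nat.even_iff.mp hn
  have hmlt : 2 * m % n < n := Nat.mod_lt _ hpos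
  have hdm' : n * K + 2 * m % n = 2 * m := hdm
  have key1 : n * K ≤ 2 * m := by omega
  have key2 : 2 * m + 2 ≤ n * K + n := by omega
  have hN : (0 : ℝ) < (n : ℝ) := by exact_mod_cast hpos
  have hπ := Real.pi_pos
  have main : ∀ θ : ℝ, Real.pi / (2 * n) < θ + (φ - 2 * m * Real.pi) / n →
      θ + (φ - 2 * m * Real.pi) / n < 3 * Real.pi / (2 * n) →
      (K : ℝ) * Real.pi < θ ∧ θ < ((K : ℝ) + 1) * Real.pi := by
    intro θ h1 h2
    have hkr : (n : ℝ) * K ≤ 2 * m := by exact_mod_cast key1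
    have hkr2 : 2 * (m : ℝ) + 2 ≤ (n : ℝ) * K + n := by exact_mod_cast key2
    have e1 : Real.pi / (2 * n) * n = Real.pi / 2 := by field_simp
    have e3 : 3 * Real.pi / (2 * n) * n = 3 * Real.pi / 2 := by field_simp
    have hc : (φ - 2 * m * Real.pi) / n * n = φ - 2 * m * Real.pi :=
      div_mul_cancel₀ _ hN.ne'
    have H1 : Real.pi / 2 < θ * n + (φ - 2 * m * Real.pi) := by
      have := mul_lt_mul_of_pos_right h1 hN
      rw [add_mul, hc, e1] at this; linarith
    have H2 : θ * n + (φ - 2 * m * Real.pi) < 3 * Real.pi / 2 := by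
      have := mul_lt_mul_of_pos_right h2 hN
      rw [add_mul, hc, e3] at this; linarith
    constructor
    · nlinarith [mul_le_mul_of_nonneg_right hkr hπ.le]
    · nlinarith [mul_le_mul_of_nonneg_right hkr2 hπ.le]
  have him : ∀ (R θ : ℝ), ((R : ℂ) * Complex.exp (θ * Complex.I)).im = R * Real.sin θ := by
    intro R θ
    rw [Complex.exp_mul_I]
    simp [Complex.sin_ofReal_re]
  have hsin : ∀ θ : ℝ, (K : ℝ) * Real.pi < θ → θ < ((K : ℝ) + 1) * Real.pi →
      Real.sin θ = (-1 : ℝ) ^ K * Real.sin (θ - K * Real.pi) := by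
    intro θ _ _
    have h := Real.sin_add_int_mul_pi (θ - K * Real.pi) (K : ℤ)
    push_cast at h
    rw [show θ - (K:ℝ) * Real.pi + (K:ℝ) * Real.pi = θ by ring] at h
    exact h
  have hsinpos : ∀ θ : ℝ, (K : ℝ) * Real.pi < θ → θ < ((K : ℝ) + 1) * Real.pi →
      0 < Real.sin (θ - K * Real.pi) := by
    intro θ h1 h2
    apply Real.sin_pos_of_pos_of_lt_pi <;> nlinarith
  rcases Nat.even_or_odd K with hKe | hKo
  · left
    rintro z ⟨R, θ, hR, rfl, h1, h2⟩
    obtain ⟨l, u⟩ := main θ h1 h2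
    rw [him]
    have := hsinpos θ l u
    rw [hsin θ l u, hKe.neg_one_pow]
    nlinarith
  · right
    rintro z ⟨R, θ, hR, rfl, h1, h2⟩
    obtain ⟨l, u⟩ := main θ h1 h2
    rw [him]
    have := hsinpos θ l u
    rw [hsin θ l u, hKo.neg_one_pow]
    nlinarith
end
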